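/- The tractor curvature R̄_{ab}(ρ, X^c, σ) = (−A_{dab}X^d, σA_{ab}{}^c + C_{ab}{}^c{}_dX^d, 0) annihilates a parallel tractor, giving the integrability conditions A_{ab}{}^cX_c = 0 and σA_{cab} + C_{abc}{}^dX_d = 0 for any ∇̄-parallel section (ρ, X^b, σ); with σ = e^{−Υ} and X_a = −σΥ_a this yields A_{cab} − C_{abc}{}^dΥ_d = 0. -/

import Mathlib

/- A coordinate-chart framework for pseudo-Riemannian geometry on ℝⁿ:
metric, Christoffel symbols, covariant derivatives, curvature, Ricci,
Schouten, Weyl, Cotton and Bach tensors, and the standard tractor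
connection, all written in index notation. -/

noncomputable section

open scoped BigOperators

/-- Points of the chart ℝⁿ. -/
abbrev Pt (n : ℕ) := Fin n → ℝ

/-- Partial derivative of a scalar function in the coordinate direction `a`. -/
def pd {n : ℕ} (a : Fin n) (f : Pt n → ℝ) (x : Pt n) : ℝ :=
  fderiv ℝ f x (Pi.single a 1)

/-- A smooth vector field. -/
def SmoothVF {n : ℕ} (K : Pt n → Pt n) : Prop := ∀ b, ContDiff ℝ (⊤ : ℕ∞) (fun x => K x b)

/-- A smooth one-form. -/
def SmoothForm {n : ℕ} (f : Pt n → Fin n → ℝ) : Prop := ∀ b, ContDiff ℝ (⊤ : ℕ∞) (fun x => f x b)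

/-- A pseudo-Riemannian metric (of arbitrary signature) in a global
coordinate chart on ℝⁿ, given by its components `g x a b`, together with the
components `ginv` of its pointwise inverse. -/
structure MetricG (n : ℕ) where
  g : Pt n → Fin n → Fin n → ℝ
  ginv : Pt n → Fin n → Fin n → ℝ
  symm : ∀ x a b, g x a b = g x b a
  smooth : ∀ a b, ContDiff ℝ (⊤ : ℕ∞) (fun x => g x a b)
  inv_mul : ∀ x a c, (∑ b, ginv x a b * g x b c) = if a = c then (1:ℝ) else 0

namespace MetricG

variable {n : ℕ} (G : MetricG n)

/-- The inner product of two tangent vectors at `x`. -/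
def ip (x : Pt n) (X Y : Pt n) : ℝ := ∑ a, ∑ b, G.g x a b * X a * Y b

/-- Christoffel symbols Γ^c_{ab} of the Levi-Civita connection. -/
def Γ (c a b : Fin n) (x : Pt n) : ℝ :=
  (1/2) * ∑ d, G.ginv x c d *
    (pd a (fun y => G.g y d b) x + pd b (fun y => G.g y d a) x - pd d (fun y => G.g y a b) x)

/-- Covariant derivative (∇_a X)^b of a vector field. -/
def covVec (X : Pt n → Pt n) (a b : Fin n) (x : Pt n) : ℝ :=
  pd a (fun y => X y b) x + ∑ c, G.Γ b a c x * X x c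

/-- Covariant derivative ∇_a ω_b of a one-form. -/
def cov1 (ω : Pt n → Fin n → ℝ) (a b : Fin n) (x : Pt n) : ℝ :=
  pd a (fun y => ω y b) x - ∑ e, G.Γ e a b x * ω x e

/-- Covariant derivative ∇_a T_{bc} of a (0,2)-tensor field. -/
def cov2 (T : Pt n → Fin n → Fin n → ℝ) (a b c : Fin n) (x : Pt n) : ℝ :=
  pd a (fun y => T y b c) x - ∑ e, G.Γ e a b x * T x e c - ∑ e, G.Γ e a c x * T x b e

/-- Covariant derivative ∇_a T_{bcd} of a (0,3)-tensor field. -/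
def cov3 (T : Pt n → Fin n → Fin n → Fin n → ℝ) (a b c d : Fin n) (x : Pt n) : ℝ :=
  pd a (fun y => T y b c d) x - ∑ e, G.Γ e a b x * T x e c d
    - ∑ e, G.Γ e a c x * T x b e d - ∑ e, G.Γ e a d x * T x b c e

/-- Curvature tensor R_{ab}{}^c{}_d, with the convention
`(∇_a∇_b − ∇_b∇_a)X^c = R_{ab}{}^c{}_d X^d`. -/
def Riem (a b c d : Fin n) (x : Pt n) : ℝ :=
  pd a (fun y => G.Γ c b d y) x - pd b (fun y => G.Γ c a d y) x
    + ∑ e, (G.Γ c a e x * G.Γ e b d x - G.Γ c b e x * G.Γ e a d x)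

/-- (4,0)-curvature tensor R_{abcd} = g_{ce} R_{ab}{}^e{}_d. -/
def Riem4 (a b c d : Fin n) (x : Pt n) : ℝ :=
  ∑ e, G.g x c e * G.Riem a b e d x

/-- Ricci tensor R_{bd} = R_{cb}{}^c{}_d. -/
def Ricci (b d : Fin n) (x : Pt n) : ℝ := ∑ c, G.Riem c b c d x

/-- Scalar curvature R = g^{ab} R_{ab}. -/
def Scal (x : Pt n) : ℝ := ∑ a, ∑ b, G.ginv x a b * G.Ricci a b x

/-- Schouten tensor P_{ab} = (1/(n−2)) (R_{ab} − R/(2(n−1)) g_{ab}). -/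
def Schouten (a b : Fin n) (x : Pt n) : ℝ :=
  (1 / ((n : ℝ) - 2)) * (G.Ricci a b x - G.Scal x / (2 * ((n : ℝ) - 1)) * G.g x a b)

/-- Weyl tensor C_{abcd} = R_{abcd} − 2(g_{c[a}P_{b]d} + g_{d[b}P_{a]c}). -/
def Weyl (a b c d : Fin n) (x : Pt n) : ℝ :=
  G.Riem4 a b c d x -
    (G.g x c a * G.Schouten b d x - G.g x c b * G.Schouten a d x
      + G.g x d b * G.Schouten a c x - G.g x d a * G.Schouten b c x)

/-- Cotton tensor A_{abc} = ∇_b P_{ca} − ∇_c P_{ba} (= 2∇_{[b}P_{c]a}). -/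
def Cotton (a b c : Fin n) (x : Pt n) : ℝ :=
  G.cov2 (fun y i j => G.Schouten i j y) b c a x - G.cov2 (fun y i j => G.Schouten i j y) c b a x

/-- Bach tensor B_{ab} = ∇^c A_{acb} + P^{dc} C_{dacb}. -/
def Bach (a b : Fin n) (x : Pt n) : ℝ :=
  (∑ c, ∑ e, G.ginv x c e * G.cov3 (fun y i j k => G.Cotton i j k y) e a c b x)
    + ∑ d, ∑ c, (∑ i, ∑ j, G.ginv x d i * G.ginv x c j * G.Schouten i j x) * G.Weyl d a c b x

/-- `K` is a null vector field. -/
def IsNull (K : Pt n → Pt n) : Prop := ∀ x, G.ip x (K x) (K x) = 0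

/-- Pure radiation condition: Ric(X,·) = 0 for every vector X orthogonal to K. -/
def PureRadiation (K : Pt n → Pt n) : Prop :=
  ∀ x (X : Pt n), G.ip x (K x) X = 0 → ∀ b, (∑ a, G.Ricci a b x * X a) = 0

/-- Parallel rays condition: ∇_a K^b = f_a K^b. -/
def ParallelRays (K : Pt n → Pt n) (f : Pt n → Fin n → ℝ) : Prop :=
  ∀ x a b, G.covVec K a b x = f x a * K x b

/-- first (ℝ-) component of the tractor derivative of the tractor (ρ, X, σ):
∇_a ρ − P_{ab} X^b. -/
def trD0 (ρ : Pt n → ℝ) (X : Pt n → Pt n) (a : Fin n) (x : Pt n) : ℝ :=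
  pd a ρ x - ∑ b, G.Schouten a b x * X x b

/-- middle (TM-) component of the tractor derivative of the tractor (ρ, X, σ):
∇_a X^b + ρ δ_a{}^b + σ P_a{}^b. -/
def trD1 (ρ : Pt n → ℝ) (X : Pt n → Pt n) (σ : Pt n → ℝ) (a b : Fin n) (x : Pt n) : ℝ :=
  G.covVec X a b x + ρ x * (if a = b then (1:ℝ) else 0)
    + σ x * ∑ e, G.ginv x b e * G.Schouten a e x

/-- last (ℝ-) component of the tractor derivative of the tractor (ρ, X, σ):
∇_a σ − g_{ab} X^b. -/
def trD2 (X : Pt n → Pt n) (σ : Pt n → ℝ) (a : Fin n) (x : Pt n) : ℝ :=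
  pd a σ x - ∑ b, G.g x a b * X x b


/-! ### Auxiliary infrastructure -/

section Aux

variable {n : ℕ}

lemma pd_congr {f g : Pt n → ℝ} (h : ∀ y, f y = g y) (a : Fin n) (x : Pt n) :
    pd a f x = pd a g x := by
  have : f = g := funext h
  rw [this]

lemma pd_neg {f : Pt n → ℝ} (a : Fin n) (x : Pt n) :
    pd a (fun y => -f y) x = -pd a f x := by
  unfold pd; rw [fderiv_fun_neg]; rfl

lemma pd_sub {f g : Pt n → ℝ} {x : Pt n} (hf : DifferentiableAt ℝ f x)
    (hg : DifferentiableAt ℝ g x) (a : Fin n) :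
    pd a (fun y => f y - g y) x = pd a f x - pd a g x := by
  unfold pd; rw [fderiv_fun_sub hf hg]; rfl

lemma pd_const (a : Fin n) (x : Pt n) (c : ℝ) : pd a (fun _ => c) x = 0 := by
  unfold pd; rw [fderiv_fun_const]; rfl

lemma pd_mul {f g : Pt n → ℝ} {x : Pt n} (hf : DifferentiableAt ℝ f x)
    (hg : DifferentiableAt ℝ g x) (a : Fin n) :
    pd a (fun y => f y * g y) x = pd a f x * g x + f x * pd a g x := by
  unfold pd; rw [fderiv_fun_mul hf hg]
  simp [ContinuousLinearMap.add_apply, ContinuousLinearMap.smul_apply]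
  ring

lemma pd_sum {ι : Type*} {s : Finset ι} {f : ι → Pt n → ℝ} {x : Pt n}
    (hf : ∀ i ∈ s, DifferentiableAt ℝ (f i) x) (a : Fin n) :
    pd a (fun y => ∑ i ∈ s, f i y) x = ∑ i ∈ s, pd a (f i) x := by
  unfold pd; rw [fderiv_fun_sum hf]; simp

lemma pd_const_mul {f : Pt n → ℝ} {x : Pt n} (hf : DifferentiableAt ℝ f x)
    (c : ℝ) (a : Fin n) :
    pd a (fun y => c * f y) x = c * pd a f x := by
  rw [pd_mul (differentiableAt_const c) hf, pd_const]; ring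

lemma contDiff_pd {f : Pt n → ℝ} (hf : ContDiff ℝ (⊤ : ℕ∞) f) (a : Fin n) :
    ContDiff ℝ (⊤ : ℕ∞) (fun x => pd a f x) := by
  unfold pd
  exact (hf.fderiv_right (by simp)).clm_apply contDiff_const

lemma diffAt {f : Pt n → ℝ} (hf : ContDiff ℝ (⊤ : ℕ∞) f) (x : Pt n) :
    DifferentiableAt ℝ f x := (hf.differentiable (by simp)).differentiableAt

/-- Schwarz symmetry of second partial derivatives. -/
lemma pd_comm {f : Pt n → ℝ} (hf : ContDiff ℝ (⊤ : ℕ∞) f) (a b : Fin n) (x : Pt n) :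
    pd a (fun y => pd b f y) x = pd b (fun y => pd a f y) x := by
  have hsym : IsSymmSndFDerivAt ℝ f x :=
    hf.contDiffAt.isSymmSndFDerivAt (by rw [minSmoothness_of_isRCLikeNormedField]; exact WithTop.coe_le_coe.mpr (le_top : (2:ℕ∞) ≤ ⊤))
  have hdf : ∀ v : Pt n, DifferentiableAt ℝ (fderiv ℝ f) v :=
    fun v => ((hf.fderiv_right (m := (⊤ : ℕ∞)) (by simp)).differentiable (by simp)).differentiableAt
  have key : ∀ v w : Pt n,
      pd a (fun y => fderiv ℝ f y w) x = fderiv ℝ (fderiv ℝ f) x (Pi.single a 1) w := by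
    intro v w
    unfold pd
    rw [fderiv_clm_apply (hdf x) (differentiableAt_const w)]
    simp
  unfold pd
  rw [show (fun y => fderiv ℝ f y (Pi.single b 1)) = (fun y => (fderiv ℝ f y) (Pi.single b 1)) from rfl]
  rw [fderiv_clm_apply (hdf x) (differentiableAt_const _), fderiv_clm_apply (hdf x) (differentiableAt_const _)]
  simp only [fderiv_fun_const, Pi.zero_apply, ContinuousLinearMap.comp_zero, ContinuousLinearMap.add_apply,
    ContinuousLinearMap.zero_apply, ContinuousLinearMap.flip_apply, zero_add, add_zero]
  exact hsym (Pi.single a 1) (Pi.single b 1)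

variable (G : MetricG n)

/-- the metric as a matrix-valued function -/
def gm (x : Pt n) : Matrix (Fin n) (Fin n) ℝ := Matrix.of (G.g x)

/-- the inverse metric as a matrix-valued function -/
def ginvm (x : Pt n) : Matrix (Fin n) (Fin n) ℝ := Matrix.of (G.ginv x)

lemma ginvm_mul (x : Pt n) : G.ginvm x * G.gm x = 1 := by
  ext a c
  simp [Matrix.mul_apply, gm, ginvm, G.inv_mul, Matrix.one_apply]

lemma gm_mul (x : Pt n) : G.gm x * G.ginvm x = 1 :=
  mul_eq_one_comm.mp (G.ginvm_mul x)

lemma mul_ginv (x : Pt n) (a c : Fin n) :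
    (∑ b, G.g x a b * G.ginv x b c) = if a = c then (1:ℝ) else 0 := by
  have := congrFun (congrFun (G.gm_mul x) a) c
  simpa [Matrix.mul_apply, gm, ginvm, Matrix.one_apply] using this

lemma ginvm_eq_inv (x : Pt n) : G.ginvm x = (G.gm x)⁻¹ :=
  (Matrix.inv_eq_left_inv (G.ginvm_mul x)).symm

lemma ginv_symm (x : Pt n) (a b : Fin n) : G.ginv x a b = G.ginv x b a := by
  have hT : (G.gm x).transpose = G.gm x := by
    ext i j; simp [Matrix.transpose_apply, gm, G.symm]
  have h1 : ((G.gm x)⁻¹).transpose = (G.gm x)⁻¹ := by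
    rw [Matrix.transpose_nonsing_inv, hT]
  have h2 := congrFun (congrFun h1 a) b
  have h3 := G.ginvm_eq_inv x
  have ha : G.ginv x a b = (G.gm x)⁻¹ a b := by
    rw [← h3]; rfl
  have hb : G.ginv x b a = (G.gm x)⁻¹ b a := by
    rw [← h3]; rfl
  rw [ha, hb, ← h2]; rfl

lemma det_gm_ne_zero (x : Pt n) : (G.gm x).det ≠ 0 := by
  intro h
  have := congrArg Matrix.det (G.ginvm_mul x)
  rw [Matrix.det_mul, h, mul_zero, Matrix.det_one] at this
  exact zero_ne_one this

lemma smooth_det {M : Pt n → Matrix (Fin n) (Fin n) ℝ}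
    (hM : ∀ i j, ContDiff ℝ (⊤ : ℕ∞) fun x => M x i j) :
    ContDiff ℝ (⊤ : ℕ∞) (fun x => (M x).det) := by
  simp only [Matrix.det_apply']
  exact ContDiff.sum fun σ _ => contDiff_const.mul (contDiff_prod fun i _ => hM _ _)

lemma smooth_ginv (a b : Fin n) : ContDiff ℝ (⊤ : ℕ∞) fun x => G.ginv x a b := by
  have h : ∀ x, G.ginv x a b = ((G.gm x).det)⁻¹ * (G.gm x).adjugate a b := by
    intro x
    have h3 : G.ginvm x = (G.gm x)⁻¹ := G.ginvm_eq_inv x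
    have : G.ginv x a b = (G.gm x)⁻¹ a b := by rw [← h3]; rfl
    rw [this, Matrix.inv_def]
    simp [Matrix.smul_apply, Ring.inverse_eq_inv', smul_eq_mul]
  rw [show (fun x => G.ginv x a b) = fun x => ((G.gm x).det)⁻¹ * (G.gm x).adjugate a b
    from funext h]
  have hdet : ContDiff ℝ (⊤ : ℕ∞) (fun x => (G.gm x).det) :=
    smooth_det (fun i j => G.smooth i j)
  have hadj : ContDiff ℝ (⊤ : ℕ∞) (fun x => (G.gm x).adjugate a b) := by
    simp only [Matrix.adjugate_apply]
    apply smooth_det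
    intro i j
    simp only [Matrix.updateRow_apply]
    by_cases hib : i = b
    · simp only [hib, if_true]; exact contDiff_const
    · simp only [hib, if_false]
      exact G.smooth i j
  exact (hdet.inv (G.det_gm_ne_zero)).mul hadj

/-! ### smoothness of the curvature quantities -/

lemma smooth_Γ (c a b : Fin n) : ContDiff ℝ (⊤ : ℕ∞) fun x => G.Γ c a b x := by
  unfold MetricG.Γ
  refine contDiff_const.mul (ContDiff.sum fun d _ => (G.smooth_ginv c d).mul ?_)
  exact ((contDiff_pd (G.smooth d b) a).add (contDiff_pd (G.smooth d a) b)).sub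
    (contDiff_pd (G.smooth a b) d)

lemma smooth_Riem (a b c d : Fin n) : ContDiff ℝ (⊤ : ℕ∞) fun x => G.Riem a b c d x := by
  unfold MetricG.Riem
  refine ((contDiff_pd (G.smooth_Γ c b d) a).sub (contDiff_pd (G.smooth_Γ c a d) b)).add
    (ContDiff.sum fun e _ => ?_)
  exact ((G.smooth_Γ c a e).mul (G.smooth_Γ e b d)).sub ((G.smooth_Γ c b e).mul (G.smooth_Γ e a d))

lemma smooth_Ricci (b d : Fin n) : ContDiff ℝ (⊤ : ℕ∞) fun x => G.Ricci b d x :=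
  ContDiff.sum fun c _ => G.smooth_Riem c b c d

lemma smooth_Scal : ContDiff ℝ (⊤ : ℕ∞) fun x => G.Scal x :=
  ContDiff.sum fun a _ => ContDiff.sum fun b _ => (G.smooth_ginv a b).mul (G.smooth_Ricci a b)

lemma smooth_Schouten (a b : Fin n) : ContDiff ℝ (⊤ : ℕ∞) fun x => G.Schouten a b x := by
  unfold MetricG.Schouten
  exact contDiff_const.mul ((G.smooth_Ricci a b).sub
    (((G.smooth_Scal.div_const _)).mul (G.smooth a b)))

/-- the Schouten tensor with one index raised, P_a{}^b. -/
def QQ (a b : Fin n) (x : Pt n) : ℝ := ∑ e, G.ginv x b e * G.Schouten a e x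

lemma smooth_QQ (a b : Fin n) : ContDiff ℝ (⊤ : ℕ∞) fun x => G.QQ a b x :=
  ContDiff.sum fun e _ => (G.smooth_ginv b e).mul (G.smooth_Schouten a e)

lemma Γ_symm (c a b : Fin n) (x : Pt n) : G.Γ c a b x = G.Γ c b a x := by
  unfold MetricG.Γ
  congr 1
  refine Finset.sum_congr rfl fun d _ => ?_
  rw [pd_congr (fun y => G.symm y a b) d x]
  ring

/-- helper: contraction with the metric then inverse metric -/
lemma g_ginv_delta (x : Pt n) (q e : Fin n) :
    (∑ d, G.g x d q * G.ginv x d e) = if q = e then (1:ℝ) else 0 := by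
  rw [show (∑ d, G.g x d q * G.ginv x d e) = ∑ d, G.g x q d * G.ginv x d e from
    Finset.sum_congr rfl fun d _ => by rw [G.symm x d q]]
  exact G.mul_ginv x q e

/-- helper contraction lemma: (∑_k A_k g_{kd}) g^{de} = A_e. -/
lemma contract_g_ginv (A : Fin n → ℝ) (e : Fin n) (x : Pt n) :
    (∑ d, (∑ k, A k * G.g x k d) * G.ginv x d e) = A e := by
  calc (∑ d, (∑ k, A k * G.g x k d) * G.ginv x d e)
      = ∑ k, A k * (∑ d, G.g x k d * G.ginv x d e) := by
        simp only [Finset.sum_mul, Finset.mul_sum]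
        rw [Finset.sum_comm]
        exact Finset.sum_congr rfl fun k _ => Finset.sum_congr rfl fun d _ => by ring
    _ = A e := by simp [G.mul_ginv]

/-- helper contraction lemma in the Γ-definition form. -/
lemma contract_inv_sum (S : Fin n → ℝ) (q : Fin n) (x : Pt n) :
    (∑ d, ((1/2 : ℝ) * ∑ e, G.ginv x d e * S e) * G.g x d q) = (1/2) * S q := by
  calc (∑ d, ((1/2 : ℝ) * ∑ e, G.ginv x d e * S e) * G.g x d q)
      = ∑ e, (∑ d, G.g x d q * G.ginv x d e) * (S e * (1/2)) := by
        simp only [Finset.mul_sum, Finset.sum_mul]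
        rw [Finset.sum_comm]
        exact Finset.sum_congr rfl fun e _ => Finset.sum_congr rfl fun d _ => by ring
    _ = (1/2) * S q := by
        simp only [G.g_ginv_delta, ite_mul, one_mul, zero_mul, Finset.sum_ite_eq,
          Finset.mem_univ, if_true]
        ring

/-- metric compatibility: ∂_a g_{bc} = Γ^d_{ab} g_{dc} + Γ^d_{ac} g_{bd}. -/
lemma metricity (x : Pt n) (a b c : Fin n) :
    pd a (fun y => G.g y b c) x
      = ∑ d, (G.Γ d a b x * G.g x d c + G.Γ d a c x * G.g x b d) := by
  have key : ∀ p q : Fin n, (∑ d, G.Γ d a p x * G.g x d q)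
      = (1/2) * (pd a (fun y => G.g y q p) x + pd p (fun y => G.g y q a) x
          - pd q (fun y => G.g y a p) x) := by
    intro p q
    unfold MetricG.Γ
    exact G.contract_inv_sum (fun e => pd a (fun y => G.g y e p) x
      + pd p (fun y => G.g y e a) x - pd e (fun y => G.g y a p) x) q x
  rw [Finset.sum_add_distrib, key b c,
    show (∑ d, G.Γ d a c x * G.g x b d) = ∑ d, G.Γ d a c x * G.g x d b from
      Finset.sum_congr rfl fun d _ => by rw [G.symm x b d],
    key c b]
  rw [pd_congr (fun y => G.symm y c b) a x, pd_congr (fun y => G.symm y c a) b x,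
    pd_congr (fun y => G.symm y a b) c x]
  ring

/-- metric compatibility for the inverse metric:
∂_b g^{ce} = −Γ^c_{bd} g^{de} − Γ^e_{bd} g^{cd}. -/
lemma metricity_inv (x : Pt n) (b c e : Fin n) :
    pd b (fun y => G.ginv y c e) x
      = -∑ d, (G.Γ c b d x * G.ginv x d e + G.Γ e b d x * G.ginv x c d) := by
  have star : ∀ d : Fin n, (∑ k, pd b (fun y => G.ginv y c k) x * G.g x k d)
      = -∑ k, G.ginv x c k * pd b (fun y => G.g y k d) x := by
    intro d
    have hdelta : pd b (fun y => ∑ k, G.ginv y c k * G.g y k d) x = 0 := by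
      rw [pd_congr (fun y => G.inv_mul y c d) b x, pd_const]
    have hexp : pd b (fun y => ∑ k, G.ginv y c k * G.g y k d) x
        = ∑ k, (pd b (fun y => G.ginv y c k) x * G.g x k d
            + G.ginv x c k * pd b (fun y => G.g y k d) x) := by
      rw [pd_sum (fun k _ => diffAt ((G.smooth_ginv c k).mul (G.smooth k d)) x) b]
      exact Finset.sum_congr rfl fun k _ =>
        pd_mul (diffAt (G.smooth_ginv c k) x) (diffAt (G.smooth k d) x) b
    have h0 := hexp.symm.trans hdelta
    rw [Finset.sum_add_distrib] at h0
    linarith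
  have expand : pd b (fun y => G.ginv y c e) x
      = ∑ d, (∑ k, pd b (fun y => G.ginv y c k) x * G.g x k d) * G.ginv x d e :=
    (G.contract_g_ginv (fun k => pd b (fun y => G.ginv y c k) x) e x).symm
  rw [expand]
  have step2 : ∀ d : Fin n, (∑ k, pd b (fun y => G.ginv y c k) x * G.g x k d)
      = -((∑ m, (∑ k, G.ginv x c k * G.Γ m b k x) * G.g x m d) + G.Γ c b d x) := by
    intro d
    rw [star d]
    have : (∑ k, G.ginv x c k * pd b (fun y => G.g y k d) x)
        = (∑ m, (∑ k, G.ginv x c k * G.Γ m b k x) * G.g x m d) + G.Γ c b d x := by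
      calc (∑ k, G.ginv x c k * pd b (fun y => G.g y k d) x)
          = ∑ k, G.ginv x c k * ∑ m, (G.Γ m b k x * G.g x m d + G.Γ m b d x * G.g x k m) := by
            exact Finset.sum_congr rfl fun k _ => by rw [G.metricity x b k d]
        _ = (∑ k, ∑ m, G.ginv x c k * G.Γ m b k x * G.g x m d)
            + (∑ m, G.Γ m b d x * ∑ k, G.ginv x c k * G.g x k m) := by
            simp only [Finset.mul_sum, mul_add, Finset.sum_add_distrib]
            congr 1
            · exact Finset.sum_congr rfl fun k _ => Finset.sum_congr rfl fun m _ => by ring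
            · rw [Finset.sum_comm]
              exact Finset.sum_congr rfl fun m _ => Finset.sum_congr rfl fun k _ => by ring
        _ = (∑ m, (∑ k, G.ginv x c k * G.Γ m b k x) * G.g x m d) + G.Γ c b d x := by
            congr 1
            · rw [Finset.sum_comm]
              exact Finset.sum_congr rfl fun m _ => by rw [Finset.sum_mul]
            · simp [G.inv_mul]
    rw [this]
  calc (∑ d, (∑ k, pd b (fun y => G.ginv y c k) x * G.g x k d) * G.ginv x d e)
      = ∑ d, (-((∑ m, (∑ k, G.ginv x c k * G.Γ m b k x) * G.g x m d) + G.Γ c b d x))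
          * G.ginv x d e := Finset.sum_congr rfl fun d _ => by rw [step2 d]
    _ = -((∑ d, (∑ m, (∑ k, G.ginv x c k * G.Γ m b k x) * G.g x m d) * G.ginv x d e)
          + ∑ d, G.Γ c b d x * G.ginv x d e) := by
        rw [← Finset.sum_add_distrib, ← Finset.sum_neg_distrib]
        exact Finset.sum_congr rfl fun d _ => by ring
    _ = -((∑ k, G.ginv x c k * G.Γ e b k x) + ∑ d, G.Γ c b d x * G.ginv x d e) := by
        rw [G.contract_g_ginv (fun m => ∑ k, G.ginv x c k * G.Γ m b k x) e x]
    _ = -∑ d, (G.Γ c b d x * G.ginv x d e + G.Γ e b d x * G.ginv x c d) := by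
        have h1 : (∑ k, G.ginv x c k * G.Γ e b k x) = ∑ d, G.Γ e b d x * G.ginv x c d :=
          Finset.sum_congr rfl fun k _ => mul_comm _ _
        rw [h1, Finset.sum_add_distrib]
        ring

/-! ### Ricci symmetry -/

/-- generic reindexing of a quadruple sum along an equivalence. -/
lemma sum4_equiv (f g : Fin n → Fin n → Fin n → Fin n → ℝ)
    (σ : (Fin n × Fin n × Fin n × Fin n) ≃ (Fin n × Fin n × Fin n × Fin n))
    (h : ∀ p : Fin n × Fin n × Fin n × Fin n,
      f p.1 p.2.1 p.2.2.1 p.2.2.2 = g (σ p).1 (σ p).2.1 (σ p).2.2.1 (σ p).2.2.2) :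
    (∑ c, ∑ e, ∑ k, ∑ m, f c e k m) = ∑ c, ∑ e, ∑ k, ∑ m, g c e k m := by
  have l1 : ∀ (F : Fin n → Fin n → Fin n → Fin n → ℝ),
      (∑ c, ∑ e, ∑ k, ∑ m, F c e k m)
        = ∑ p : Fin n × Fin n × Fin n × Fin n, F p.1 p.2.1 p.2.2.1 p.2.2.2 := by
    intro F
    simp [Fintype.sum_prod_type]
  rw [l1 f, l1 g]
  rw [show (fun p : Fin n × Fin n × Fin n × Fin n => f p.1 p.2.1 p.2.2.1 p.2.2.2)
      = fun p => g (σ p).1 (σ p).2.1 (σ p).2.2.1 (σ p).2.2.2 from funext h]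
  exact Equiv.sum_comp σ fun p => g p.1 p.2.1 p.2.2.1 p.2.2.2

/-- the equivalence (c,e,k,m) ↦ (m,k,c,e). -/
def perm4a {n : ℕ} : (Fin n × Fin n × Fin n × Fin n) ≃ (Fin n × Fin n × Fin n × Fin n) where
  toFun p := (p.2.2.2, p.2.2.1, p.1, p.2.1)
  invFun p := (p.2.2.1, p.2.2.2, p.2.1, p.1)
  left_inv p := rfl
  right_inv p := rfl

/-- the equivalence (c,e,k,m) ↦ (c,k,m,e). -/
def perm4b {n : ℕ} : (Fin n × Fin n × Fin n × Fin n) ≃ (Fin n × Fin n × Fin n × Fin n) where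
  toFun p := (p.1, p.2.2.1, p.2.2.2, p.2.1)
  invFun p := (p.1, p.2.2.2, p.2.1, p.2.2.1)
  left_inv p := rfl
  right_inv p := rfl

/-- the equivalence (c,e,k,m) ↦ (e,k,m,c). -/
def perm4c {n : ℕ} : (Fin n × Fin n × Fin n × Fin n) ≃ (Fin n × Fin n × Fin n × Fin n) where
  toFun p := (p.2.1, p.2.2.1, p.2.2.2, p.1)
  invFun p := (p.2.2.2, p.1, p.2.1, p.2.2.1)
  left_inv p := rfl
  right_inv p := rfl

lemma ginv_g' (x : Pt n) (k m : Fin n) :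
    (∑ e, G.ginv x k e * G.g x m e) = if k = m then (1:ℝ) else 0 := by
  rw [show (∑ e, G.ginv x k e * G.g x m e) = ∑ e, G.ginv x k e * G.g x e m from
    Finset.sum_congr rfl fun e _ => by rw [G.symm x m e]]
  exact G.inv_mul x k m

/-- contraction of the first quadruple sum. -/
lemma contractT1 (x : Pt n) (u v : Fin n) :
    (∑ c, ∑ e, ∑ k, ∑ m, G.Γ c u k x * G.ginv x k e * (G.Γ m v c x * G.g x m e))
      = ∑ c, ∑ k, G.Γ c u k x * G.Γ k v c x := by
  rw [sum4_equiv (fun c e k m => G.Γ c u k x * G.ginv x k e * (G.Γ m v c x * G.g x m e))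
    (fun c k m e => G.Γ c u k x * G.ginv x k e * (G.Γ m v c x * G.g x m e))
    perm4b (fun _ => rfl)]
  refine Finset.sum_congr rfl fun c _ => Finset.sum_congr rfl fun k _ => ?_
  calc (∑ m, ∑ e, G.Γ c u k x * G.ginv x k e * (G.Γ m v c x * G.g x m e))
      = ∑ m, (G.Γ c u k x * G.Γ m v c x) * (if k = m then (1:ℝ) else 0) := by
        refine Finset.sum_congr rfl fun m _ => ?_
        rw [← G.ginv_g' x k m, Finset.mul_sum]
        exact Finset.sum_congr rfl fun e _ => by ring
    _ = G.Γ c u k x * G.Γ k v c x := by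
        simp

/-- contraction of the fourth quadruple sum. -/
lemma contractT4 (x : Pt n) (u v : Fin n) :
    (∑ c, ∑ e, ∑ k, ∑ m, G.Γ e u k x * G.ginv x c k * (G.Γ m v e x * G.g x c m))
      = ∑ c, ∑ k, G.Γ c u k x * G.Γ k v c x := by
  rw [sum4_equiv (fun c e k m => G.Γ e u k x * G.ginv x c k * (G.Γ m v e x * G.g x c m))
    (fun e k m c => G.Γ e u k x * G.ginv x c k * (G.Γ m v e x * G.g x c m))
    perm4c (fun _ => rfl)]
  refine Finset.sum_congr rfl fun e _ => Finset.sum_congr rfl fun k _ => ?_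
  calc (∑ m, ∑ c, G.Γ e u k x * G.ginv x c k * (G.Γ m v e x * G.g x c m))
      = ∑ m, (G.Γ e u k x * G.Γ m v e x) * (if k = m then (1:ℝ) else 0) := by
        refine Finset.sum_congr rfl fun m _ => ?_
        have hc : (∑ c, G.ginv x c k * G.g x c m) = if k = m then (1:ℝ) else 0 := by
          rw [show (∑ c, G.ginv x c k * G.g x c m) = ∑ c, G.ginv x k c * G.g x c m from
            Finset.sum_congr rfl fun c _ => by rw [G.ginv_symm x c k]]
          exact G.inv_mul x k m
        rw [← hc, Finset.mul_sum]
        exact Finset.sum_congr rfl fun c _ => by ring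
    _ = G.Γ e u k x * G.Γ k v e x := by simp

/-- symmetry of the first-derivative cross term. -/
lemma Wsymm (x : Pt n) (d b : Fin n) :
    (∑ c, ∑ e, pd d (fun y => G.ginv y c e) x * pd b (fun y => G.g y c e) x)
      = ∑ c, ∑ e, pd b (fun y => G.ginv y c e) x * pd d (fun y => G.g y c e) x := by
  have expand : ∀ u v : Fin n,
      (∑ c, ∑ e, pd u (fun y => G.ginv y c e) x * pd v (fun y => G.g y c e) x)
        = -((∑ c, ∑ k, G.Γ c u k x * G.Γ k v c x)
            + ((∑ c, ∑ e, ∑ k, ∑ m, G.Γ c u k x * G.ginv x k e * (G.Γ m v e x * G.g x c m))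
              + ((∑ c, ∑ e, ∑ k, ∑ m, G.Γ e u k x * G.ginv x c k * (G.Γ m v c x * G.g x m e))
                + (∑ c, ∑ k, G.Γ c u k x * G.Γ k v c x)))) := by
    intro u v
    have step1 : (∑ c, ∑ e, pd u (fun y => G.ginv y c e) x * pd v (fun y => G.g y c e) x)
        = -∑ c, ∑ e, ∑ k, ∑ m,
            (G.Γ c u k x * G.ginv x k e + G.Γ e u k x * G.ginv x c k)
              * (G.Γ m v c x * G.g x m e + G.Γ m v e x * G.g x c m) := by
      rw [← Finset.sum_neg_distrib]
      refine Finset.sum_congr rfl fun c _ => ?_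
      rw [← Finset.sum_neg_distrib]
      refine Finset.sum_congr rfl fun e _ => ?_
      rw [G.metricity_inv x u c e, G.metricity x v c e, neg_mul, Finset.sum_mul_sum]
    rw [step1]
    congr 1
    have hsplit : (∑ c, ∑ e, ∑ k, ∑ m,
            (G.Γ c u k x * G.ginv x k e + G.Γ e u k x * G.ginv x c k)
              * (G.Γ m v c x * G.g x m e + G.Γ m v e x * G.g x c m))
        = (∑ c, ∑ e, ∑ k, ∑ m, G.Γ c u k x * G.ginv x k e * (G.Γ m v c x * G.g x m e))
          + (∑ c, ∑ e, ∑ k, ∑ m, G.Γ e u k x * G.ginv x c k * (G.Γ m v c x * G.g x m e))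
          + ((∑ c, ∑ e, ∑ k, ∑ m, G.Γ c u k x * G.ginv x k e * (G.Γ m v e x * G.g x c m))
            + (∑ c, ∑ e, ∑ k, ∑ m, G.Γ e u k x * G.ginv x c k * (G.Γ m v e x * G.g x c m))) := by
      simp only [add_mul, mul_add, Finset.sum_add_distrib]
    rw [hsplit, G.contractT1 x u v, G.contractT4 x u v]
    ring
  rw [expand d b, expand b d]
  have h1 : (∑ c, ∑ k, G.Γ c d k x * G.Γ k b c x) = ∑ c, ∑ k, G.Γ c b k x * G.Γ k d c x := by
    rw [Finset.sum_comm]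
    exact Finset.sum_congr rfl fun k _ => Finset.sum_congr rfl fun c _ => mul_comm _ _
  have h2 : (∑ c, ∑ e, ∑ k, ∑ m, G.Γ e d k x * G.ginv x c k * (G.Γ m b c x * G.g x m e))
      = ∑ c, ∑ e, ∑ k, ∑ m, G.Γ c b k x * G.ginv x k e * (G.Γ m d e x * G.g x c m) :=
    sum4_equiv _ _ perm4a (fun p => by simp only [perm4a, Equiv.coe_fn_mk]; ring)
  have h3 : (∑ c, ∑ e, ∑ k, ∑ m, G.Γ e b k x * G.ginv x c k * (G.Γ m d c x * G.g x m e))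
      = ∑ c, ∑ e, ∑ k, ∑ m, G.Γ c d k x * G.ginv x k e * (G.Γ m b e x * G.g x c m) :=
    sum4_equiv _ _ perm4a (fun p => by simp only [perm4a, Equiv.coe_fn_mk]; ring)
  rw [h1, h2, h3]
  ring

/-- the trace of the Christoffel symbols. -/
lemma traceΓ (x : Pt n) (b : Fin n) :
    (∑ c, G.Γ c c b x)
      = (1/2) * ∑ c, ∑ e, G.ginv x c e * pd b (fun y => G.g y c e) x := by
  unfold MetricG.Γ
  rw [← Finset.mul_sum]
  congr 1
  have expand : (∑ c, ∑ e, G.ginv x c e *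
      (pd c (fun y => G.g y e b) x + pd b (fun y => G.g y e c) x - pd e (fun y => G.g y c b) x))
      = (∑ c, ∑ e, G.ginv x c e * pd c (fun y => G.g y e b) x)
        + (∑ c, ∑ e, G.ginv x c e * pd b (fun y => G.g y e c) x)
        - (∑ c, ∑ e, G.ginv x c e * pd e (fun y => G.g y c b) x) := by
    simp only [mul_add, mul_sub, Finset.sum_add_distrib, Finset.sum_sub_distrib]
  rw [expand]
  have h13 : (∑ c, ∑ e, G.ginv x c e * pd c (fun y => G.g y e b) x)
      = ∑ c, ∑ e, G.ginv x c e * pd e (fun y => G.g y c b) x := by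
    rw [Finset.sum_comm]
    exact Finset.sum_congr rfl fun e _ => Finset.sum_congr rfl fun c _ => by
      rw [G.ginv_symm x e c]
  have h2 : (∑ c, ∑ e, G.ginv x c e * pd b (fun y => G.g y e c) x)
      = ∑ c, ∑ e, G.ginv x c e * pd b (fun y => G.g y c e) x :=
    Finset.sum_congr rfl fun c _ => Finset.sum_congr rfl fun e _ => by
      rw [pd_congr (fun y => G.symm y e c) b x]
  rw [h13, h2]
  ring

/-- antisymmetric part of the Ricci tensor in terms of the trace of Γ. -/
lemma Ricci_asym (x : Pt n) (b d : Fin n) :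
    G.Ricci b d x - G.Ricci d b x
      = pd d (fun y => ∑ c, G.Γ c c b y) x - pd b (fun y => ∑ c, G.Γ c c d y) x := by
  rw [pd_sum (fun c _ => diffAt (G.smooth_Γ c c b) x) d,
    pd_sum (fun c _ => diffAt (G.smooth_Γ c c d) x) b]
  unfold MetricG.Ricci MetricG.Riem
  simp only [Finset.sum_add_distrib, Finset.sum_sub_distrib]
  have hA : (∑ c, pd c (fun y => G.Γ c b d y) x) = ∑ c, pd c (fun y => G.Γ c d b y) x :=
    Finset.sum_congr rfl fun c _ => pd_congr (fun y => G.Γ_symm c b d y) c x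
  have hB : (∑ c, ∑ e, G.Γ c c e x * G.Γ e b d x) = ∑ c, ∑ e, G.Γ c c e x * G.Γ e d b x :=
    Finset.sum_congr rfl fun c _ => Finset.sum_congr rfl fun e _ => by
      rw [G.Γ_symm e b d x]
  have hC : (∑ c, ∑ e, G.Γ c b e x * G.Γ e c d x) = ∑ c, ∑ e, G.Γ c d e x * G.Γ e c b x := by
    rw [Finset.sum_comm]
    refine Finset.sum_congr rfl fun e _ => Finset.sum_congr rfl fun c _ => ?_
    rw [G.Γ_symm c b e x, G.Γ_symm e c d x]
    ring
  rw [hA, hB, hC]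
  ring

/-- the Ricci tensor is symmetric. -/
lemma Ricci_symm (x : Pt n) (b d : Fin n) : G.Ricci b d x = G.Ricci d b x := by
  have key : pd d (fun y => ∑ c, G.Γ c c b y) x = pd b (fun y => ∑ c, G.Γ c c d y) x := by
    have hfun : ∀ p : Fin n, (fun y => ∑ c, G.Γ c c p y)
        = fun y => (1/2 : ℝ) * ∑ c, ∑ e, G.ginv y c e * pd p (fun z => G.g z c e) y :=
      fun p => funext fun y => G.traceΓ y p
    have hdiffsum : ∀ (p : Fin n) (y : Pt n),
        DifferentiableAt ℝ (fun z => ∑ c, ∑ e, G.ginv z c e * pd p (fun w => G.g w c e) z) y :=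
      fun p y => diffAt (ContDiff.sum fun c _ => ContDiff.sum fun e _ =>
        (G.smooth_ginv c e).mul (contDiff_pd (G.smooth c e) p)) y
    have hexp : ∀ u p : Fin n, pd u (fun y => ∑ c, G.Γ c c p y) x
        = (1/2) * ∑ c, ∑ e, (pd u (fun y => G.ginv y c e) x * pd p (fun z => G.g z c e) x
            + G.ginv x c e * pd u (fun y => pd p (fun z => G.g z c e) y) x) := by
      intro u p
      rw [pd_congr (fun y => G.traceΓ y p) u x,
        pd_const_mul (hdiffsum p x) ((1:ℝ)/2) u]
      congr 1
      rw [pd_sum (fun c _ => diffAt (ContDiff.sum fun e _ =>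
        (G.smooth_ginv c e).mul (contDiff_pd (G.smooth c e) p)) x) u]
      refine Finset.sum_congr rfl fun c _ => ?_
      rw [pd_sum (fun e _ => diffAt ((G.smooth_ginv c e).mul (contDiff_pd (G.smooth c e) p)) x) u]
      refine Finset.sum_congr rfl fun e _ => ?_
      exact pd_mul (diffAt (G.smooth_ginv c e) x) (diffAt (contDiff_pd (G.smooth c e) p) x) u
    rw [hexp d b, hexp b d]
    congr 1
    simp only [Finset.sum_add_distrib]
    have hsecond : (∑ c, ∑ e, G.ginv x c e * pd d (fun y => pd b (fun z => G.g z c e) y) x)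
        = ∑ c, ∑ e, G.ginv x c e * pd b (fun y => pd d (fun z => G.g z c e) y) x :=
      Finset.sum_congr rfl fun c _ => Finset.sum_congr rfl fun e _ => by
        rw [pd_comm (G.smooth c e) d b x]
    rw [G.Wsymm x d b, hsecond]
  have h := G.Ricci_asym x b d
  rw [key] at h
  linarith

/-- the Schouten tensor is symmetric. -/
lemma Schouten_symm (x : Pt n) (a b : Fin n) : G.Schouten a b x = G.Schouten b a x := by
  unfold MetricG.Schouten
  rw [G.Ricci_symm x a b, G.symm x a b]

/-! ### claim 1 -/

lemma PQ_symm (x : Pt n) (a b : Fin n) :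
    (∑ d, G.Schouten b d x * G.QQ a d x) = ∑ d, G.Schouten a d x * G.QQ b d x := by
  unfold MetricG.QQ
  simp only [Finset.mul_sum]
  rw [Finset.sum_comm]
  refine Finset.sum_congr rfl fun d _ => Finset.sum_congr rfl fun e _ => ?_
  rw [G.ginv_symm x e d]
  ring

lemma claim1 (ρ σ : Pt n → ℝ) (X : Pt n → Pt n)
    (hρ : ContDiff ℝ (⊤ : ℕ∞) ρ) (hX : SmoothVF X)
    (Eρ : ∀ x a, pd a ρ x = ∑ d, G.Schouten a d x * X x d)
    (EX : ∀ x a b, pd a (fun y => X y b) x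
      = -(∑ c, G.Γ b a c x * X x c) - ρ x * (if a = b then (1:ℝ) else 0) - σ x * G.QQ a b x)
    (x : Pt n) (a b : Fin n) :
    (∑ d, G.Cotton d a b x * X x d) = 0 := by
  have hside : ∀ u v : Fin n, pd u (fun y => pd v ρ y) x
      = (∑ d, pd u (fun y => G.Schouten v d y) x * X x d)
        - (∑ d, G.Schouten v d x * ∑ c, G.Γ d u c x * X x c)
        - ρ x * G.Schouten v u x
        - σ x * (∑ d, G.Schouten v d x * G.QQ u d x) := by
    intro u v
    rw [pd_congr (fun y => Eρ y v) u x]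
    rw [pd_sum (fun d _ => diffAt ((G.smooth_Schouten v d).mul (hX d)) x) u]
    have hterm : ∀ d : Fin n, pd u (fun y => G.Schouten v d y * X y d) x
        = pd u (fun y => G.Schouten v d y) x * X x d
          - G.Schouten v d x * (∑ c, G.Γ d u c x * X x c)
          - ρ x * (G.Schouten v d x * (if u = d then (1:ℝ) else 0))
          - σ x * (G.Schouten v d x * G.QQ u d x) := by
      intro d
      rw [pd_mul (diffAt (G.smooth_Schouten v d) x) (diffAt (hX d) x) u, EX x u d]
      ring
    rw [Finset.sum_congr rfl fun d _ => hterm d]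
    simp only [Finset.sum_sub_distrib]
    have h3 : (∑ d, ρ x * (G.Schouten v d x * (if u = d then (1:ℝ) else 0)))
        = ρ x * G.Schouten v u x := by
      rw [← Finset.mul_sum]
      congr 1
      simp
    have h4 : (∑ d, σ x * (G.Schouten v d x * G.QQ u d x))
        = σ x * (∑ d, G.Schouten v d x * G.QQ u d x) := (Finset.mul_sum _ _ _).symm
    rw [h3, h4]
  have h0 : pd a (fun y => pd b ρ y) x = pd b (fun y => pd a ρ y) x := pd_comm hρ a b x
  rw [hside a b, hside b a] at h0
  have hCot : (∑ d, G.Cotton d a b x * X x d)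
      = ((∑ d, pd a (fun y => G.Schouten b d y) x * X x d)
          - (∑ d, pd b (fun y => G.Schouten a d y) x * X x d))
        - ((∑ d, ∑ e, G.Γ e a d x * G.Schouten b e x * X x d)
          - (∑ d, ∑ e, G.Γ e b d x * G.Schouten a e x * X x d)) := by
    have hper : ∀ d : Fin n, G.Cotton d a b x
        = (pd a (fun y => G.Schouten b d y) x - pd b (fun y => G.Schouten a d y) x)
          - ((∑ e, G.Γ e a d x * G.Schouten b e x) - (∑ e, G.Γ e b d x * G.Schouten a e x)) := by
      intro d
      unfold MetricG.Cotton MetricG.cov2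
      have hcancel : (∑ e, G.Γ e a b x * G.Schouten e d x)
          = ∑ e, G.Γ e b a x * G.Schouten e d x :=
        Finset.sum_congr rfl fun e _ => by rw [G.Γ_symm e a b x]
      rw [hcancel]
      ring
    rw [Finset.sum_congr rfl fun d _ => by rw [hper d]]
    simp only [sub_mul, Finset.sum_sub_distrib, Finset.sum_mul]
  have hswap : ∀ u v : Fin n, (∑ d, ∑ e, G.Γ e u d x * G.Schouten v e x * X x d)
      = ∑ d, G.Schouten v d x * ∑ c, G.Γ d u c x * X x c := by
    intro u v
    rw [Finset.sum_comm]
    refine Finset.sum_congr rfl fun d _ => ?_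
    rw [Finset.mul_sum]
    refine Finset.sum_congr rfl fun c _ => ?_
    ring
  have hPQ := G.PQ_symm x a b
  have hPsym := G.Schouten_symm x b a
  rw [hPQ, hPsym] at h0
  rw [hCot, hswap a b, hswap b a]
  linarith [h0]

/-! ### claim 2 -/

lemma pd_mul_const {f : Pt n → ℝ} {x : Pt n} (hf : DifferentiableAt ℝ f x)
    (c : ℝ) (a : Fin n) :
    pd a (fun y => f y * c) x = pd a f x * c := by
  rw [pd_mul hf (differentiableAt_const c) a, pd_const]
  ring

lemma Cotton_expand (x : Pt n) (d a b : Fin n) :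
    G.Cotton d a b x
      = (pd a (fun y => G.Schouten b d y) x - pd b (fun y => G.Schouten a d y) x)
        - ((∑ e, G.Γ e a d x * G.Schouten b e x) - (∑ e, G.Γ e b d x * G.Schouten a e x)) := by
  unfold MetricG.Cotton MetricG.cov2
  have hcancel : (∑ e, G.Γ e a b x * G.Schouten e d x)
      = ∑ e, G.Γ e b a x * G.Schouten e d x :=
    Finset.sum_congr rfl fun e _ => by rw [G.Γ_symm e a b x]
  rw [hcancel]
  ring

lemma pdQQ (x : Pt n) (u p q : Fin n) :
    pd u (fun y => G.QQ p q y) x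
      = -(∑ e, ∑ k, (G.Γ q u k x * G.ginv x k e + G.Γ e u k x * G.ginv x q k)
            * G.Schouten p e x)
        + ∑ e, G.ginv x q e * pd u (fun y => G.Schouten p e y) x := by
  have hQ : (fun y => G.QQ p q y) = fun y => ∑ e, G.ginv y q e * G.Schouten p e y := rfl
  rw [hQ, pd_sum (fun e _ => diffAt ((G.smooth_ginv q e).mul (G.smooth_Schouten p e)) x) u]
  have hterm : ∀ e : Fin n, pd u (fun y => G.ginv y q e * G.Schouten p e y) x
      = -((∑ k, (G.Γ q u k x * G.ginv x k e + G.Γ e u k x * G.ginv x q k)) * G.Schouten p e x)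
        + G.ginv x q e * pd u (fun y => G.Schouten p e y) x := by
    intro e
    rw [pd_mul (diffAt (G.smooth_ginv q e) x) (diffAt (G.smooth_Schouten p e) x) u,
      G.metricity_inv x u q e]
    ring
  rw [Finset.sum_congr rfl fun e _ => hterm e, Finset.sum_add_distrib]
  congr 1
  rw [Finset.sum_neg_distrib]
  congr 1
  exact Finset.sum_congr rfl fun e _ => by rw [Finset.sum_mul]

lemma CQ (x : Pt n) (a b c : Fin n) :
    pd b (fun y => G.QQ a c y) x - pd a (fun y => G.QQ b c y) x
      - ((∑ d, G.Γ c a d x * G.QQ b d x) - (∑ d, G.Γ c b d x * G.QQ a d x))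
      = -∑ e, G.ginv x c e * G.Cotton e a b x := by
  rw [G.pdQQ x b a c, G.pdQQ x a b c]
  have hsplit : ∀ u v : Fin n,
      (∑ e, ∑ k, (G.Γ c u k x * G.ginv x k e + G.Γ e u k x * G.ginv x c k)
          * G.Schouten v e x)
        = (∑ d, G.Γ c u d x * G.QQ v d x)
          + (∑ e, ∑ k, G.ginv x c e * (G.Γ k u e x * G.Schouten v k x)) := by
    intro u v
    have h1 : (∑ e, ∑ k, (G.Γ c u k x * G.ginv x k e + G.Γ e u k x * G.ginv x c k)
          * G.Schouten v e x)
        = (∑ e, ∑ k, G.Γ c u k x * G.ginv x k e * G.Schouten v e x)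
          + (∑ e, ∑ k, G.Γ e u k x * G.ginv x c k * G.Schouten v e x) := by
      simp only [add_mul, Finset.sum_add_distrib]
    rw [h1]
    congr 1
    · rw [Finset.sum_comm]
      refine Finset.sum_congr rfl fun d _ => ?_
      unfold MetricG.QQ
      rw [Finset.mul_sum]
      exact Finset.sum_congr rfl fun e _ => by ring
    · rw [Finset.sum_comm]
      exact Finset.sum_congr rfl fun e _ => Finset.sum_congr rfl fun k _ => by ring
  rw [hsplit b a, hsplit a b]
  have hR : (∑ e, G.ginv x c e * G.Cotton e a b x)
      = ((∑ e, G.ginv x c e * pd a (fun y => G.Schouten b e y) x)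
          - (∑ e, G.ginv x c e * pd b (fun y => G.Schouten a e y) x))
        - ((∑ e, ∑ k, G.ginv x c e * (G.Γ k a e x * G.Schouten b k x))
          - (∑ e, ∑ k, G.ginv x c e * (G.Γ k b e x * G.Schouten a k x))) := by
    rw [Finset.sum_congr rfl fun e _ => by rw [G.Cotton_expand x e a b]]
    simp only [mul_sub, Finset.sum_sub_distrib, Finset.mul_sum]
  rw [hR]
  ring

lemma claim2 (ρ σ : Pt n → ℝ) (X : Pt n → Pt n)
    (hρ : ContDiff ℝ (⊤ : ℕ∞) ρ) (hσ : ContDiff ℝ (⊤ : ℕ∞) σ) (hX : SmoothVF X)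
    (Eρ : ∀ x a, pd a ρ x = ∑ d, G.Schouten a d x * X x d)
    (EX : ∀ x a b, pd a (fun y => X y b) x
      = -(∑ c, G.Γ b a c x * X x c) - ρ x * (if a = b then (1:ℝ) else 0) - σ x * G.QQ a b x)
    (Eσ : ∀ x a, pd a σ x = ∑ d, G.g x a d * X x d)
    (x : Pt n) (a b c : Fin n) :
    σ x * G.Cotton c a b x + (∑ d, G.Weyl a b c d x * X x d) = 0 := by
  have hXdd : ∀ u v w : Fin n, pd u (fun y => pd v (fun z => X z w) y) x
      = -(∑ d, (pd u (fun y => G.Γ w v d y) x * X x d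
            + G.Γ w v d x * (-(∑ e, G.Γ d u e x * X x e)
              - ρ x * (if u = d then (1:ℝ) else 0) - σ x * G.QQ u d x)))
        - (∑ d, G.Schouten u d x * X x d) * (if v = w then (1:ℝ) else 0)
        - ((∑ d, G.g x u d * X x d) * G.QQ v w x
            + σ x * pd u (fun y => G.QQ v w y) x) := by
    intro u v w
    rw [pd_congr (fun y => EX y v w) u x]
    have d1 : DifferentiableAt ℝ (fun y => ∑ e, G.Γ w v e y * X y e) x :=
      diffAt (ContDiff.sum fun e _ => (G.smooth_Γ w v e).mul (hX e)) x
    have d1' : DifferentiableAt ℝ (fun y => -(∑ e, G.Γ w v e y * X y e)) x := d1.neg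
    have d2 : DifferentiableAt ℝ (fun y => ρ y * (if v = w then (1:ℝ) else 0)) x :=
      diffAt (hρ.mul contDiff_const) x
    have d3 : DifferentiableAt ℝ (fun y => σ y * G.QQ v w y) x :=
      diffAt (hσ.mul (G.smooth_QQ v w)) x
    rw [pd_sub (f := fun y => -(∑ e, G.Γ w v e y * X y e) - ρ y * (if v = w then (1:ℝ) else 0)) (d1'.sub d2) d3 u, pd_sub d1' d2 u, pd_neg u x,
      pd_sum (fun e _ => diffAt ((G.smooth_Γ w v e).mul (hX e)) x) u,
      pd_mul_const (diffAt hρ x) _ u,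
      pd_mul (diffAt hσ x) (diffAt (G.smooth_QQ v w) x) u,
      Eρ x u, Eσ x u,
      Finset.sum_congr rfl fun d _ => by
        rw [pd_mul (diffAt (G.smooth_Γ w v d) x) (diffAt (hX d) x) u, EX x u d]]
  have hfull : ∀ u v w : Fin n,
      (∑ d, (pd u (fun y => G.Γ w v d y) x * X x d
          + G.Γ w v d x * (-(∑ e, G.Γ d u e x * X x e)
            - ρ x * (if u = d then (1:ℝ) else 0) - σ x * G.QQ u d x)))
        = (∑ d, pd u (fun y => G.Γ w v d y) x * X x d)
          - (∑ d, ∑ e, G.Γ w v d x * (G.Γ d u e x * X x e))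
          - ρ x * G.Γ w v u x
          - σ x * (∑ d, G.Γ w v d x * G.QQ u d x) := by
    intro u v w
    have hd : ∀ d : Fin n, (pd u (fun y => G.Γ w v d y) x * X x d
        + G.Γ w v d x * (-(∑ e, G.Γ d u e x * X x e)
          - ρ x * (if u = d then (1:ℝ) else 0) - σ x * G.QQ u d x))
        = pd u (fun y => G.Γ w v d y) x * X x d
          - (∑ e, G.Γ w v d x * (G.Γ d u e x * X x e))
          - ρ x * (G.Γ w v d x * (if u = d then (1:ℝ) else 0))
          - σ x * (G.Γ w v d x * G.QQ u d x) := by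
      intro d
      have hms : G.Γ w v d x * (∑ e, G.Γ d u e x * X x e)
          = ∑ e, G.Γ w v d x * (G.Γ d u e x * X x e) := Finset.mul_sum _ _ _
      linear_combination -hms
    rw [Finset.sum_congr rfl fun d _ => hd d]
    simp only [Finset.sum_sub_distrib]
    have h3 : (∑ d, ρ x * (G.Γ w v d x * (if u = d then (1:ℝ) else 0)))
        = ρ x * G.Γ w v u x := by
      rw [← Finset.mul_sum]
      congr 1
      simp
    have h4 : (∑ d, σ x * (G.Γ w v d x * G.QQ u d x))
        = σ x * ∑ d, G.Γ w v d x * G.QQ u d x := (Finset.mul_sum _ _ _).symm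
    rw [h3, h4]
  have hRiem : ∀ w : Fin n, (∑ d, G.Riem a b w d x * X x d)
      = (∑ d, pd a (fun y => G.Γ w b d y) x * X x d)
        - (∑ d, pd b (fun y => G.Γ w a d y) x * X x d)
        + ((∑ d, ∑ e, G.Γ w a d x * (G.Γ d b e x * X x e))
          - (∑ d, ∑ e, G.Γ w b d x * (G.Γ d a e x * X x e))) := by
    intro w
    unfold MetricG.Riem
    have hd : ∀ d : Fin n, (pd a (fun y => G.Γ w b d y) x - pd b (fun y => G.Γ w a d y) x
          + ∑ e, (G.Γ w a e x * G.Γ e b d x - G.Γ w b e x * G.Γ e a d x)) * X x d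
        = pd a (fun y => G.Γ w b d y) x * X x d - pd b (fun y => G.Γ w a d y) x * X x d
          + ((∑ e, G.Γ w a e x * G.Γ e b d x * X x d)
            - (∑ e, G.Γ w b e x * G.Γ e a d x * X x d)) := by
      intro d
      have h1 : (∑ e, (G.Γ w a e x * G.Γ e b d x - G.Γ w b e x * G.Γ e a d x)) * X x d
          = (∑ e, G.Γ w a e x * G.Γ e b d x * X x d)
            - (∑ e, G.Γ w b e x * G.Γ e a d x * X x d) := by
        rw [Finset.sum_sub_distrib, sub_mul, Finset.sum_mul, Finset.sum_mul]
      linear_combination h1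
    rw [Finset.sum_congr rfl fun d _ => hd d]
    simp only [Finset.sum_add_distrib, Finset.sum_sub_distrib]
    have hsw : ∀ u v : Fin n, (∑ d, ∑ e, G.Γ w u e x * G.Γ e v d x * X x d)
        = ∑ d, ∑ e, G.Γ w u d x * (G.Γ d v e x * X x e) := by
      intro u v
      rw [Finset.sum_comm]
      exact Finset.sum_congr rfl fun d _ => Finset.sum_congr rfl fun e _ => by ring
    rw [hsw a b, hsw b a]
  have K : ∀ w : Fin n, (∑ d, G.Riem a b w d x * X x d)
      + σ x * (∑ e, G.ginv x w e * G.Cotton e a b x)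
      + (∑ d, G.Schouten a d x * X x d) * (if b = w then (1:ℝ) else 0)
      - (∑ d, G.Schouten b d x * X x d) * (if a = w then (1:ℝ) else 0)
      + (∑ d, G.g x a d * X x d) * G.QQ b w x
      - (∑ d, G.g x b d * X x d) * G.QQ a w x = 0 := by
    intro w
    have h := pd_comm (hX w) a b x
    rw [hXdd a b w, hXdd b a w, hfull a b w, hfull b a w, G.Γ_symm w b a x] at h
    have hc := G.CQ x a b w
    rw [hRiem w]
    linear_combination (-1 : ℝ) * h + σ x * hc
  have hsum : (∑ w, G.g x c w * ((∑ d, G.Riem a b w d x * X x d)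
      + σ x * (∑ e, G.ginv x w e * G.Cotton e a b x)
      + (∑ d, G.Schouten a d x * X x d) * (if b = w then (1:ℝ) else 0)
      - (∑ d, G.Schouten b d x * X x d) * (if a = w then (1:ℝ) else 0)
      + (∑ d, G.g x a d * X x d) * G.QQ b w x
      - (∑ d, G.g x b d * X x d) * G.QQ a w x)) = 0 :=
    Finset.sum_eq_zero fun w _ => by rw [K w, mul_zero]
  have c1 : (∑ w, G.g x c w * (∑ d, G.Riem a b w d x * X x d))
      = ∑ d, G.Riem4 a b c d x * X x d := by
    simp only [Finset.mul_sum]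
    rw [Finset.sum_comm]
    refine Finset.sum_congr rfl fun d _ => ?_
    unfold MetricG.Riem4
    rw [Finset.sum_mul]
    exact Finset.sum_congr rfl fun w _ => by ring
  have c2 : (∑ w, G.g x c w * (σ x * (∑ e, G.ginv x w e * G.Cotton e a b x)))
      = σ x * G.Cotton c a b x := by
    have step : (∑ w, G.g x c w * (σ x * (∑ e, G.ginv x w e * G.Cotton e a b x)))
        = ∑ e, (∑ w, G.g x c w * G.ginv x w e) * (σ x * G.Cotton e a b x) := by
      simp only [Finset.mul_sum]
      rw [Finset.sum_comm]
      refine Finset.sum_congr rfl fun e _ => ?_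
      rw [Finset.sum_mul]
      exact Finset.sum_congr rfl fun w _ => by ring
    rw [step]
    simp only [G.mul_ginv, ite_mul, one_mul, zero_mul, Finset.sum_ite_eq, Finset.mem_univ,
      if_true]
  have c3 : (∑ w, G.g x c w * ((∑ d, G.Schouten a d x * X x d) * (if b = w then (1:ℝ) else 0)))
      = G.g x c b * (∑ d, G.Schouten a d x * X x d) := by
    simp [mul_ite, mul_comm]
  have c4 : (∑ w, G.g x c w * ((∑ d, G.Schouten b d x * X x d) * (if a = w then (1:ℝ) else 0)))
      = G.g x c a * (∑ d, G.Schouten b d x * X x d) := by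
    simp [mul_ite, mul_comm]
  have c5 : (∑ w, G.g x c w * ((∑ d, G.g x a d * X x d) * G.QQ b w x))
      = (∑ d, G.g x a d * X x d) * G.Schouten b c x := by
    have hgq : (∑ w, G.g x c w * G.QQ b w x) = G.Schouten b c x := by
      unfold MetricG.QQ
      simp only [Finset.mul_sum]
      rw [Finset.sum_comm]
      have step : ∀ e : Fin n, (∑ w, G.g x c w * (G.ginv x w e * G.Schouten b e x))
          = (∑ w, G.g x c w * G.ginv x w e) * G.Schouten b e x := by
        intro e
        rw [Finset.sum_mul]
        exact Finset.sum_congr rfl fun w _ => by ring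
      rw [Finset.sum_congr rfl fun e _ => step e]
      simp [G.mul_ginv]
    calc (∑ w, G.g x c w * ((∑ d, G.g x a d * X x d) * G.QQ b w x))
        = (∑ d, G.g x a d * X x d) * ∑ w, G.g x c w * G.QQ b w x := by
          rw [Finset.mul_sum]
          exact Finset.sum_congr rfl fun w _ => by ring
      _ = (∑ d, G.g x a d * X x d) * G.Schouten b c x := by rw [hgq]
  have c6 : (∑ w, G.g x c w * ((∑ d, G.g x b d * X x d) * G.QQ a w x))
      = (∑ d, G.g x b d * X x d) * G.Schouten a c x := by
    have hgq : (∑ w, G.g x c w * G.QQ a w x) = G.Schouten a c x := by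
      unfold MetricG.QQ
      simp only [Finset.mul_sum]
      rw [Finset.sum_comm]
      have step : ∀ e : Fin n, (∑ w, G.g x c w * (G.ginv x w e * G.Schouten a e x))
          = (∑ w, G.g x c w * G.ginv x w e) * G.Schouten a e x := by
        intro e
        rw [Finset.sum_mul]
        exact Finset.sum_congr rfl fun w _ => by ring
      rw [Finset.sum_congr rfl fun e _ => step e]
      simp [G.mul_ginv]
    calc (∑ w, G.g x c w * ((∑ d, G.g x b d * X x d) * G.QQ a w x))
        = (∑ d, G.g x b d * X x d) * ∑ w, G.g x c w * G.QQ a w x := by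
          rw [Finset.mul_sum]
          exact Finset.sum_congr rfl fun w _ => by ring
      _ = (∑ d, G.g x b d * X x d) * G.Schouten a c x := by rw [hgq]
  rw [show (∑ w, G.g x c w * ((∑ d, G.Riem a b w d x * X x d)
      + σ x * (∑ e, G.ginv x w e * G.Cotton e a b x)
      + (∑ d, G.Schouten a d x * X x d) * (if b = w then (1:ℝ) else 0)
      - (∑ d, G.Schouten b d x * X x d) * (if a = w then (1:ℝ) else 0)
      + (∑ d, G.g x a d * X x d) * G.QQ b w x
      - (∑ d, G.g x b d * X x d) * G.QQ a w x))
    = (∑ w, G.g x c w * (∑ d, G.Riem a b w d x * X x d))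
      + (∑ w, G.g x c w * (σ x * (∑ e, G.ginv x w e * G.Cotton e a b x)))
      + (∑ w, G.g x c w * ((∑ d, G.Schouten a d x * X x d) * (if b = w then (1:ℝ) else 0)))
      - (∑ w, G.g x c w * ((∑ d, G.Schouten b d x * X x d) * (if a = w then (1:ℝ) else 0)))
      + (∑ w, G.g x c w * ((∑ d, G.g x a d * X x d) * G.QQ b w x))
      - (∑ w, G.g x c w * ((∑ d, G.g x b d * X x d) * G.QQ a w x)) from by
      simp only [mul_add, mul_sub, Finset.sum_add_distrib, Finset.sum_sub_distrib],
    c1, c2, c3, c4, c5, c6] at hsum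
  have hW : (∑ d, G.Weyl a b c d x * X x d)
      = (∑ d, G.Riem4 a b c d x * X x d)
        - (G.g x c a * (∑ d, G.Schouten b d x * X x d)
          - G.g x c b * (∑ d, G.Schouten a d x * X x d)
          + G.Schouten a c x * (∑ d, G.g x d b * X x d)
          - G.Schouten b c x * (∑ d, G.g x d a * X x d)) := by
    have hd : ∀ d : Fin n, G.Weyl a b c d x * X x d
        = G.Riem4 a b c d x * X x d
          - (G.g x c a * (G.Schouten b d x * X x d)
            - G.g x c b * (G.Schouten a d x * X x d)
            + G.Schouten a c x * (G.g x d b * X x d)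
            - G.Schouten b c x * (G.g x d a * X x d)) := by
      intro d
      unfold MetricG.Weyl
      ring
    rw [Finset.sum_congr rfl fun d _ => hd d]
    simp only [Finset.sum_sub_distrib, Finset.sum_add_distrib, ← Finset.mul_sum]
  have hga : (∑ d, G.g x d a * X x d) = ∑ d, G.g x a d * X x d :=
    Finset.sum_congr rfl fun d _ => by rw [G.symm x d a]
  have hgb : (∑ d, G.g x d b * X x d) = ∑ d, G.g x b d * X x d :=
    Finset.sum_congr rfl fun d _ => by rw [G.symm x d b]
  rw [hW, hga, hgb]
  linear_combination hsum

end Aux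

end MetricG
/-- The tractor curvature annihilates a ∇̄-parallel tractor (ρ, X^b, σ),
giving the integrability conditions A_{dab}X^d = 0 and σA_{cab} + C_{abc}{}^dX_d = 0;
with σ = e^{−Υ} and X_a = −σΥ_a this yields A_{cab} − C_{abc}{}^dΥ_d = 0. -/
theorem stmt_17 {n : ℕ} (hn : 3 ≤ n) (G : MetricG n)
    (ρ σ : Pt n → ℝ) (X : Pt n → Pt n)
    (hρ : ContDiff ℝ (⊤ : ℕ∞) ρ) (hσ : ContDiff ℝ (⊤ : ℕ∞) σ) (hX : SmoothVF X)
    (hpar : ∀ x a, G.trD0 ρ X a x = 0 ∧ (∀ b, G.trD1 ρ X σ a b x = 0) ∧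
      G.trD2 X σ a x = 0) :
    (∀ x a b, (∑ d, G.Cotton d a b x * X x d) = 0) ∧
      (∀ x a b c, σ x * G.Cotton c a b x + (∑ d, G.Weyl a b c d x * X x d) = 0) ∧
      ∀ Υ : Pt n → ℝ, ContDiff ℝ (⊤ : ℕ∞) Υ → (∀ x, σ x = Real.exp (-Υ x)) →
        (∀ x a, (∑ b, G.g x a b * X x b) = -(σ x) * pd a Υ x) →
        ∀ x a b c, G.Cotton c a b x
          - (∑ d, G.Weyl a b c d x * (∑ e, G.ginv x d e * pd e Υ x)) = 0 := by
  have Eρ : ∀ x a, pd a ρ x = ∑ d, G.Schouten a d x * X x d := by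
    intro x a
    have h := (hpar x a).1
    unfold MetricG.trD0 at h
    linarith
  have EX : ∀ x a b, pd a (fun y => X y b) x
      = -(∑ c, G.Γ b a c x * X x c) - ρ x * (if a = b then (1:ℝ) else 0)
        - σ x * G.QQ a b x := by
    intro x a b
    have h := (hpar x a).2.1 b
    unfold MetricG.trD1 MetricG.covVec at h
    rw [show G.QQ a b x = ∑ e, G.ginv x b e * G.Schouten a e x from rfl]
    linarith
  have Eσ : ∀ x a, pd a σ x = ∑ d, G.g x a d * X x d := by
    intro x a
    have h := (hpar x a).2.2
    unfold MetricG.trD2 at h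
    linarith
  refine ⟨fun x a b => G.claim1 ρ σ X hρ hX Eρ EX x a b,
    fun x a b c => G.claim2 ρ σ X hρ hσ hX Eρ EX Eσ x a b c, ?_⟩
  intro Υ hΥ hσΥ hXΥ x a b c
  have hXd : ∀ d : Fin n, X x d = -(σ x) * ∑ e, G.ginv x d e * pd e Υ x := by
    intro d
    have h1 : X x d = ∑ e, G.ginv x d e * (∑ b', G.g x e b' * X x b') := by
      symm
      calc (∑ e, G.ginv x d e * (∑ b', G.g x e b' * X x b'))
          = ∑ b', (∑ e, G.ginv x d e * G.g x e b') * X x b' := by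
            simp only [Finset.mul_sum]
            rw [Finset.sum_comm]
            exact Finset.sum_congr rfl fun b' _ => by
              rw [Finset.sum_mul]
              exact Finset.sum_congr rfl fun e _ => by ring
        _ = X x d := by simp [G.inv_mul]
    rw [h1, Finset.sum_congr rfl fun e _ => by rw [hXΥ x e]]
    rw [Finset.mul_sum]
    exact Finset.sum_congr rfl fun e _ => by ring
  have h2 := G.claim2 ρ σ X hρ hσ hX Eρ EX Eσ x a b c
  have h3 : (∑ d, G.Weyl a b c d x * X x d)
      = -(σ x) * ∑ d, G.Weyl a b c d x * (∑ e, G.ginv x d e * pd e Υ x) := by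
    rw [Finset.mul_sum]
    exact Finset.sum_congr rfl fun d _ => by rw [hXd d]; ring
  rw [h3] at h2
  have hσne : σ x ≠ 0 := by rw [hσΥ x]; exact (Real.exp_pos _).ne'
  have hz : σ x * (G.Cotton c a b x
      - ∑ d, G.Weyl a b c d x * (∑ e, G.ginv x d e * pd e Υ x)) = 0 := by
    linear_combination h2
  rcases mul_eq_zero.mp hz with h | h
  · exact absurd h hσne
  · exact h
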